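/- arXiv:2510.26975 — 2 statements merged into one kernel-verified Lean document; each statement's English description precedes it below -/
import Mathlib

section
/- Let (G, T) be a graft that is a strong comb with respect to a vertex r with tooth set B, and let F be a minimum join of (G, T). Then every vertex v ∈ B is incident to exactly one edge of F. -/
open SimpleGraph
open scoped Classical

variable {V : Type*} [Fintype V] [DecidableEq V]

/-- `(G, T)` is a graft: every connected component of `G` contains an even number
of vertices of `T`. -/
def IsGraft (G : SimpleGraph V) (T : Set V) : Prop :=
  ∀ v : V, Even {u ∈ T | G.Reachable v u}.ncard

/-- `F` is a join of `(G, T)`: `F ⊆ E(G)` and every vertex `v` is incident to an odd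
number of edges of `F` exactly when `v ∈ T`. -/
def IsJoin (G : SimpleGraph V) (T : Set V) (F : Set (Sym2 V)) : Prop :=
  F ⊆ G.edgeSet ∧ ∀ v : V, (Odd {e ∈ F | v ∈ e}.ncard ↔ v ∈ T)

/-- `F` is a minimum join of `(G, T)`. -/
def IsMinJoin (G : SimpleGraph V) (T : Set V) (F : Set (Sym2 V)) : Prop :=
  IsJoin G T F ∧ ∀ F' : Set (Sym2 V), IsJoin G T F' → F.ncard ≤ F'.ncard

/-- `F`-weight of an edge: `-1` if the edge is in `F`, `+1` otherwise. -/
noncomputable def ew (F : Set (Sym2 V)) (e : Sym2 V) : ℤ :=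
  if e ∈ F then -1 else 1

/-- `F`-weight of a walk: the sum of the `F`-weights of its edges. -/
noncomputable def walkWeight {G : SimpleGraph V} {x y : V} (F : Set (Sym2 V))
    (p : G.Walk x y) : ℤ :=
  (p.edges.map (ew F)).sum

/-- `F`-distance between `x` and `y`: the minimum `F`-weight of a path between them. -/
noncomputable def distF (G : SimpleGraph V) (F : Set (Sym2 V)) (x y : V) : ℤ :=
  sInf {w : ℤ | ∃ p : G.Walk x y, p.IsPath ∧ walkWeight F p = w}

/-- `F` covers the vertex `v`. -/
def Covers (F : Set (Sym2 V)) (v : V) : Prop := ∃ e ∈ F, v ∈ e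

/-- The edge set `F` is nonempty and determines a connected subgraph. -/
def ConnectedEdgeSet (F : Set (Sym2 V)) : Prop :=
  F.Nonempty ∧ ∀ x y : V, Covers F x → Covers F y →
    (SimpleGraph.fromEdgeSet F).Reachable x y

/-- `e` has exactly one endpoint in `K`. -/
def Crossing (K : Set V) (e : Sym2 V) : Prop :=
  ∃ x y : V, e = s(x, y) ∧ x ∈ K ∧ y ∉ K

/-- The subgraph of `G` induced on `S` (viewed as a graph on the same vertex type). -/
def sgRestrict (G : SimpleGraph V) (S : Set V) : SimpleGraph V where
  Adj x y := G.Adj x y ∧ x ∈ S ∧ y ∈ S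
  symm := ⟨fun x y h => ⟨h.1.symm, h.2.2, h.2.1⟩⟩
  loopless := ⟨fun x h => G.loopless.irrefl x h.1⟩

/-- The subgraph of `G` induced on `S`, with all edges having both endpoints in `L` deleted. -/
def sgRestrictDel (G : SimpleGraph V) (S L : Set V) : SimpleGraph V where
  Adj x y := G.Adj x y ∧ x ∈ S ∧ y ∈ S ∧ ¬(x ∈ L ∧ y ∈ L)
  symm := ⟨fun x y h => ⟨h.1.symm, h.2.2.1, h.2.1, fun hc => h.2.2.2 ⟨hc.2, hc.1⟩⟩⟩
  loopless := ⟨fun x h => G.loopless.irrefl x h.1⟩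

/-- `K` is (the vertex set of) a connected component of the subgraph of `G` induced on `S`. -/
def IsCompOn (G : SimpleGraph V) (S K : Set V) : Prop :=
  ∃ v ∈ S, K = {u | (sgRestrict G S).Reachable v u}

/-- `(G, T)` is a strong comb with respect to `r` with tooth set `B`. -/
def IsStrongComb (G : SimpleGraph V) (T : Set V) (r : V) (B : Set V) : Prop :=
  (∀ x ∈ B, ∀ y ∈ B, ¬G.Adj x y) ∧
  (∀ v : V, v ∉ B → ∃ b ∈ B, G.Adj v b) ∧
  r ∉ B ∧
  ∀ F : Set (Sym2 V), IsMinJoin G T F →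
    (∀ x ∈ B, distF G F r x = -1) ∧ (∀ x : V, x ∉ B → distF G F r x = 0)

/-! Let `P` be a path of weight `-1` from `r` to a tooth `v`, and `uv` its last edge. As `u` is not
a tooth, the rest of `P` has weight `≥ 0`, so `uv ∈ F`. Any other edge `vw ∈ F` leads to a
contradiction: if `w` is off `P`, then `P + vw` is a path of weight `-2` to the non-tooth `w`;
if `w` is on `P`, then the segment of `P` from `w` to `v` closed up by `vw` is a cycle of negative
weight, whereas flipping a minimum join along a cycle changes its size by the weight of the
cycle. -/

open scoped symmDiff

theorem Set.ncard_symmDiff_add_two_mul_ncard_inter {α : Type*} {s t : Set α}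
    (hs : s.Finite) (ht : t.Finite) :
    (s ∆ t).ncard + 2 * (s ∩ t).ncard = s.ncard + t.ncard := by
  rw [Set.symmDiff_def, Set.ncard_union_eq disjoint_sdiff_sdiff hs.sdiff ht.sdiff]
  have hs' := Set.ncard_inter_add_ncard_sdiff_eq_ncard s t hs
  have ht' := Set.ncard_inter_add_ncard_sdiff_eq_ncard t s ht
  rw [Set.inter_comm t s] at ht'
  omega

namespace SimpleGraph.Walk

variable {α : Type*} {G : SimpleGraph α}

theorem IsPath.edges_eq_singleton_of_mem {a b : α} {p : G.Walk a b} (hp : p.IsPath)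
    (h : s(a, b) ∈ p.edges) : p.edges = [s(a, b)] := by
  cases p with
  | nil => simp at h
  | @cons _ c _ hadj q =>
    rw [cons_isPath_iff] at hp
    rw [edges_cons] at h ⊢
    rcases List.mem_cons.mp h with heq | hmem
    · obtain rfl : b = c := by
        rcases Sym2.eq_iff.mp heq with ⟨-, h⟩ | ⟨h, -⟩
        · exact h
        · exact absurd h hadj.ne
      rw [(isPath_iff_nil.mp hp.1).eq_nil, edges_nil]
    · exact absurd (fst_mem_support_of_mem_edges q hmem) hp.2

theorem IsTrail.even_ncard_incident {u : α} {p : G.Walk u u} (hp : p.IsTrail) (x : α) :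
    Even {e ∈ p.edgeSet | x ∈ e}.ncard := by
  have hcount : {e ∈ p.edgeSet | x ∈ e}.ncard = p.edges.countP (x ∈ ·) := by
    rw [List.countP_eq_length_filter, ← List.toFinset_card_of_nodup (hp.edges_nodup.filter _),
      ← Set.ncard_coe_finset]
    congr 1
    ext e
    simp [edgeSet]
  rw [hcount]
  exact (hp.even_countP_edges_iff x).mpr fun h => absurd rfl h

end SimpleGraph.Walk

open Walk

section Weight

variable {α : Type*} {G : SimpleGraph α} {F : Set (Sym2 α)}

theorem ew_eq_neg_one_of_mem {e : Sym2 α} (he : e ∈ F) : ew F e = -1 := if_pos he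

theorem mem_of_ew_lt_one {e : Sym2 α} (he : ew F e < 1) : e ∈ F := by
  by_contra h
  simp [ew, h] at he

theorem neg_one_le_ew (e : Sym2 α) : -1 ≤ ew F e := by
  unfold ew; split <;> omega

@[simp]
theorem walkWeight_nil {x : α} : walkWeight F (nil : G.Walk x x) = 0 := rfl

theorem walkWeight_cons {x y z : α} (h : G.Adj x y) (p : G.Walk y z) :
    walkWeight F (cons h p) = ew F s(x, y) + walkWeight F p := by
  simp [walkWeight]

theorem walkWeight_append {x y z : α} (p : G.Walk x y) (q : G.Walk y z) :
    walkWeight F (p.append q) = walkWeight F p + walkWeight F q := by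
  simp [walkWeight]

theorem walkWeight_concat {x y z : α} (p : G.Walk x y) (h : G.Adj y z) :
    walkWeight F (p.concat h) = walkWeight F p + ew F s(y, z) := by
  simp [walkWeight, edges_concat]

theorem neg_length_le_walkWeight {x y : α} (p : G.Walk x y) :
    -(p.length : ℤ) ≤ walkWeight F p := by
  induction p with
  | nil => simp
  | @cons u v _ h p ih =>
    rw [walkWeight_cons, length_cons]
    have := neg_one_le_ew (F := F) s(u, v)
    push_cast
    omega

theorem bddBelow_pathWeights [Fintype α] (x y : α) :
    BddBelow {w : ℤ | ∃ p : G.Walk x y, p.IsPath ∧ walkWeight F p = w} := by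
  refine ⟨-(Fintype.card α : ℤ), ?_⟩
  rintro w ⟨p, hp, rfl⟩
  have := neg_length_le_walkWeight (F := F) p
  have := hp.length_lt
  omega

theorem distF_le_walkWeight [Fintype α] {x y : α} {p : G.Walk x y} (hp : p.IsPath) :
    distF G F x y ≤ walkWeight F p :=
  csInf_le (bddBelow_pathWeights x y) ⟨p, hp, rfl⟩

/-- `sInf ∅ = 0` in `ℤ`, so a nonzero distance is the weight of some path. -/
theorem exists_isPath_walkWeight_eq_distF [Fintype α] {x y : α} (h : distF G F x y ≠ 0) :
    ∃ p : G.Walk x y, p.IsPath ∧ walkWeight F p = distF G F x y := by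
  have hne : {w : ℤ | ∃ p : G.Walk x y, p.IsPath ∧ walkWeight F p = w}.Nonempty := by
    by_contra hempty
    rw [Set.not_nonempty_iff_eq_empty] at hempty
    exact h (by rw [distF, hempty, Int.csInf_empty])
  exact Int.csInf_mem hne (bddBelow_pathWeights x y)

theorem SimpleGraph.Walk.IsTrail.walkWeight_eq [Finite α] {x y : α} {p : G.Walk x y}
    (hp : p.IsTrail) : walkWeight F p = ((F ∆ p.edgeSet).ncard : ℤ) - F.ncard := by
  have hsum : walkWeight F p = ∑ e ∈ p.edges.toFinset, ew F e := by
    rw [walkWeight, List.sum_toFinset _ hp.edges_nodup]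
  have hS : p.edgeSet = ↑p.edges.toFinset := by ext; simp [edgeSet]
  have hinter : (F ∩ p.edgeSet).ncard = (p.edges.toFinset.filter (· ∈ F)).card := by
    rw [hS, ← Set.ncard_coe_finset, Finset.coe_filter, Set.inter_comm]
    rfl
  have hcard := Set.ncard_symmDiff_add_two_mul_ncard_inter F.toFinite p.edgeSet.toFinite
  rw [hS, Set.ncard_coe_finset, ← hS, hinter] at hcard
  have hsplit := Finset.card_filter_add_card_filter_not (s := p.edges.toFinset) (· ∈ F)
  rw [hsum]
  simp only [ew, Finset.sum_ite, Finset.sum_const, nsmul_eq_mul, mul_neg, mul_one]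
  omega

end Weight

section Join

variable {α : Type*} {G : SimpleGraph α} {T : Set α} {F : Set (Sym2 α)}

theorem IsJoin.symmDiff [Finite α] {S : Set (Sym2 α)} (hF : IsJoin G T F) (hS : S ⊆ G.edgeSet)
    (heven : ∀ x, Even {e ∈ S | x ∈ e}.ncard) : IsJoin G T (F ∆ S) := by
  refine ⟨fun e he => ?_, fun x => ?_⟩
  · rcases he with ⟨he, -⟩ | ⟨he, -⟩
    exacts [hF.1 he, hS he]
  · have hsep : {e ∈ F ∆ S | x ∈ e} = {e ∈ F | x ∈ e} ∆ {e ∈ S | x ∈ e} := by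
      ext e
      simp only [Set.mem_symmDiff, Set.mem_ofPred_eq]
      tauto
    have hcard := Set.ncard_symmDiff_add_two_mul_ncard_inter
      (Set.toFinite {e ∈ F | x ∈ e}) (Set.toFinite {e ∈ S | x ∈ e})
    rw [← hF.2 x, hsep, Nat.odd_iff, Nat.odd_iff]
    have := Nat.even_iff.mp (heven x)
    omega

theorem IsMinJoin.walkWeight_nonneg_of_isTrail [Finite α] (hF : IsMinJoin G T F) {x : α}
    {C : G.Walk x x} (hC : C.IsTrail) : 0 ≤ walkWeight F C := by
  have hmin := hF.2 _ (hF.1.symmDiff (S := C.edgeSet) (fun _ he => C.edges_subset_edgeSet he)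
    hC.even_ncard_incident)
  rw [hC.walkWeight_eq]
  omega

variable [Fintype α]

theorem IsMinJoin.eq_of_mem_of_concat (hF : IsMinJoin G T F) {r u v w : α} {q : G.Walk r u}
    {hu : G.Adj u v} (hP : (q.concat hu).IsPath) (hwt : walkWeight F (q.concat hu) ≤ 0)
    (hvw : s(v, w) ∈ F) (hw : 0 ≤ distF G F r w) : w = u := by
  set P := q.concat hu
  have hadj : G.Adj v w := hF.1.1 hvw
  by_cases hwP : w ∈ P.support
  · set Q := P.dropUntil w hwP
    have hsplit : walkWeight F (P.takeUntil w hwP) + walkWeight F Q = walkWeight F P := by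
      rw [← walkWeight_append, take_spec]
    have htake := hw.trans (distF_le_walkWeight (hP.takeUntil hwP))
    by_cases hQ : s(w, v) ∈ Q.edges
    · have hedges : (P.takeUntil w hwP).edges ++ [s(w, v)] = q.edges ++ [s(u, v)] := by
        rw [← (hP.dropUntil hwP).edges_eq_singleton_of_mem hQ, ← edges_append, take_spec,
          edges_concat, List.concat_eq_append]
      exact Sym2.congr_left.mp (List.singleton_inj.mp (List.append_inj_right' hedges rfl))
    · have hC : (cons hadj Q).IsCycle :=
        (cons_isCycle_iff Q hadj).mpr ⟨hP.dropUntil hwP, by rwa [Sym2.eq_swap]⟩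
      have := hF.walkWeight_nonneg_of_isTrail hC.isTrail
      rw [walkWeight_cons, ew_eq_neg_one_of_mem hvw] at this
      omega
  · have := hw.trans (distF_le_walkWeight (hP.concat hwP hadj))
    rw [walkWeight_concat, ew_eq_neg_one_of_mem hvw] at this
    omega

theorem IsMinJoin.ncard_incident_eq_one (hF : IsMinJoin G T F) {r v : α} {P : G.Walk r v}
    (hP : P.IsPath) (hwt : walkWeight F P = -1) (hN : ∀ w, G.Adj v w → 0 ≤ distF G F r w) :
    {e ∈ F | v ∈ e}.ncard = 1 := by
  have hPnil : ¬P.Nil := by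
    intro h
    cases h
    simp at hwt
  have hu := P.adj_penultimate hPnil
  rw [← P.concat_dropLast hu] at hP hwt
  have hq := (hN _ hu.symm).trans (distF_le_walkWeight ((concat_isPath_iff hu).mp hP).1)
  have huv : s(P.penultimate, v) ∈ F := by
    rw [walkWeight_concat] at hwt
    exact mem_of_ew_lt_one (by omega)
  rw [Set.ncard_eq_one]
  refine ⟨_, Set.eq_singleton_iff_unique_mem.mpr ⟨⟨huv, Sym2.mem_mk_right _ _⟩, ?_⟩⟩
  rintro e ⟨he, hve⟩
  obtain ⟨w, rfl⟩ := Sym2.mem_iff_exists.mp hve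
  rw [hF.eq_of_mem_of_concat hP (by omega) he (hN w (hF.1.1 he)), Sym2.eq_swap]

end Join

theorem stmt_4_general (G : SimpleGraph V) (T : Set V) (r : V) (B : Set V)
    (hcomb : IsStrongComb G T r B)
    (F : Set (Sym2 V)) (hF : IsMinJoin G T F) :
    ∀ v ∈ B, {e ∈ F | v ∈ e}.ncard = 1 := by
  obtain ⟨hstable, -, -, hdist⟩ := hcomb
  obtain ⟨hdistB, hdistNB⟩ := hdist F hF
  intro v hv
  obtain ⟨P, hP, hwt⟩ :=
    exists_isPath_walkWeight_eq_distF (show distF G F r v ≠ 0 by rw [hdistB v hv]; decide)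
  refine hF.ncard_incident_eq_one hP (hwt.trans (hdistB v hv)) fun w hvw => ?_
  rw [hdistNB w fun hw => hstable v hv w hw hvw]

/-- if the graft `(G, T)` is a strong comb with respect to `r` with tooth
set `B` and `F` is a minimum join, then every `v ∈ B` is incident to exactly one edge of `F`. -/
theorem stmt_4 (G : SimpleGraph V) (T : Set V) (r : V) (B : Set V)
    (hG : IsGraft G T) (hcomb : IsStrongComb G T r B)
    (F : Set (Sym2 V)) (hF : IsMinJoin G T F) :
    ∀ v ∈ B, {e ∈ F | v ∈ e}.ncard = 1 :=
  stmt_4_general G T r B hcomb F hF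
end

section
/- Let (G, T) be a rake with head r and tooth set B, and for each b ∈ B let (H_b, T_b) ∈ P(r_b, A_b), these grafts being mutually disjoint and disjoint from G, and for each b ∈ B let F_b be a connected minimum join of (H_b, T_b) covering r_b. Let (Ĝ, T̂) be a gluing sum of (G, T) and the (H_b, T_b). Then F̂ := {rr_b : b ∈ B} ∪ ⋃_{b∈B} F_b is a connected minimum join of (Ĝ, T̂) that covers r. -/
/-!
The theorem follows from a stronger invariant carried through the inductive definition of
`P(r, A)`: a minimum join of `(H, T)` is no larger than any join of `(H, T Δ P)` with `P ⊆ A`.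
For a rake the star at the head is such a join, since each tooth is odd in `T Δ P` and the teeth
are pairwise nonadjacent. In a gluing sum, a join `J` of `(Ĝ, T̂ Δ P)` with `P ⊆ V(G) ∖ B`
splits over the teeth. The part of `J` inside `H_b` is a join of `(H_b, T_b Δ P_b)`, where `P_b`
is made of `r_b` and the ends in `H_b` of the edges of `J` leaving `H_b`; so `P_b ⊆ A_b` and this
part has at least `|F_b|` edges. Since `|T_b Δ {r_b}|` is odd, the handshake lemma forces `J` to
contain an edge leaving `H_b` as well. Hence `|J| ≥ ∑_b (|F_b| + 1) ≥ |F̂|`, while a degree count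
shows that `F̂` is a join. Connectivity of `F̂` comes from the connected `F_b` through the edges
`r r_b`.
-/

open SimpleGraph
open scoped Classical

variable {V : Type*} [Fintype V] [DecidableEq V]

/-- `(G, T)` is a rake with head `r` and tooth set `B`, viewed as a graph whose
vertex set is `S` (all edges of `G` lie inside `S`). -/
def IsRakeOn (S : Set V) (G : SimpleGraph V) (T : Set V) (r : V) (B : Set V) : Prop :=
  (∀ x y : V, G.Adj x y → x ∈ S ∧ y ∈ S) ∧
  B ⊆ T ∧ T ⊆ S ∧
  (∀ x ∈ B, ∀ y ∈ B, ¬G.Adj x y) ∧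
  (∀ v ∈ S \ B, ∃ b ∈ B, G.Adj v b) ∧
  r ∈ S \ B ∧ (∀ b ∈ B, G.Adj r b) ∧
  (Odd B.ncard → T = B ∪ {r}) ∧ (¬Odd B.ncard → T = B)

/-- The edge set of a gluing sum: the edges of the rake `G` avoiding the tooth set `B`,
for each edge `xb` of `G` with `b ∈ B` the edge `x f_b(xb)`, and all edges of the
grafts `GH b` glued at the teeth. -/
def glueEdges (G : SimpleGraph V) (B : Set V) (GH : V → SimpleGraph V)
    (f : V → V → V) : Set (Sym2 V) :=
  {e ∈ G.edgeSet | ∀ v ∈ e, v ∉ B} ∪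
  {e : Sym2 V | ∃ b ∈ B, ∃ x : V, G.Adj x b ∧ e = s(x, f b x)} ∪
  ⋃ b ∈ B, (GH b).edgeSet

/-- The graph of a gluing sum. -/
def glueGraph (G : SimpleGraph V) (B : Set V) (GH : V → SimpleGraph V)
    (f : V → V → V) : SimpleGraph V :=
  SimpleGraph.fromEdgeSet (glueEdges G B GH f)

/-- The `T`-set of a gluing sum: `(T ∖ B) ∪ ⋃_{b ∈ B} (T_b Δ {r_b})`. -/
def glueT (T B : Set V) (TH : V → Set V) (rb : V → V) : Set V :=
  (T \ B) ∪ ⋃ b ∈ B, symmDiff (TH b) {rb b}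

/-- The vertex set of a gluing sum. -/
def glueSupport (S B : Set V) (SH : V → Set V) : Set V :=
  (S \ B) ∪ ⋃ b ∈ B, SH b

/-- The class `P(r, A)`, defined inductively. `PClass S G T r A` means the graft
`(G, T)` with vertex set `S` belongs to `P(r, A)`. -/
inductive PClass : Set V → SimpleGraph V → Set V → V → Set V → Prop
  /-- Every rake with head `r` and tooth set `B` belongs to `P(r, V(G) ∖ B)`. -/
  | base (S : Set V) (G : SimpleGraph V) (T : Set V) (r : V) (B : Set V) :
      IsRakeOn S G T r B → PClass S G T r (S \ B)
  /-- Gluing a family of members `(GH b, TH b) ∈ P(rb b, Ab b)` (`b ∈ B`), mutually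
  disjoint and disjoint from the rake `(G, T)`, onto the teeth of the rake. -/
  | glue (S : Set V) (G : SimpleGraph V) (T : Set V) (r : V) (B : Set V)
      (SH : V → Set V) (GH : V → SimpleGraph V) (TH : V → Set V)
      (rb : V → V) (Ab : V → Set V) (f : V → V → V) :
      IsRakeOn S G T r B →
      (∀ b ∈ B, PClass (SH b) (GH b) (TH b) (rb b) (Ab b)) →
      (∀ b ∈ B, ∀ b' ∈ B, b ≠ b' → Disjoint (SH b) (SH b')) →
      (∀ b ∈ B, Disjoint (SH b) S) →
      (∀ b ∈ B, ∀ x : V, G.Adj x b → f b x ∈ Ab b) →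
      (∀ b ∈ B, f b r = rb b) →
      PClass (glueSupport S B SH) (glueGraph G B GH f) (glueT T B TH rb) r (S \ B)

section

omit [Fintype V] [DecidableEq V]

def oddVerts (F : Set (Sym2 V)) : Set V := {v | Odd {e ∈ F | v ∈ e}.ncard}

theorem isJoin_iff {G : SimpleGraph V} {T : Set V} {F : Set (Sym2 V)} :
    IsJoin G T F ↔ F ⊆ G.edgeSet ∧ oddVerts F = T := by
  rw [IsJoin, Set.ext_iff]
  rfl

theorem mem_oddVerts_congr {F F' : Set (Sym2 V)} {v : V} (h : ∀ e, v ∈ e → (e ∈ F ↔ e ∈ F')) :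
    v ∈ oddVerts F ↔ v ∈ oddVerts F' := by
  have : {e ∈ F | v ∈ e} = {e ∈ F' | v ∈ e} := by
    ext e
    exact and_congr_left (h e)
  simp only [oddVerts, Set.mem_ofPred_eq, this]

theorem SimpleGraph.mem_support_of_mem_edgeSet {H : SimpleGraph V} {e : Sym2 V}
    (he : e ∈ H.edgeSet) {v : V} (hv : v ∈ e) : v ∈ H.support := by
  obtain ⟨w, rfl⟩ := Sym2.mem_iff_exists.mp hv
  exact SimpleGraph.Adj.mem_support_left he

theorem Covers.of_mem_oddVerts {F : Set (Sym2 V)} {v : V} (h : v ∈ oddVerts F) : Covers F v := by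
  obtain ⟨e, he, hve⟩ := Set.nonempty_of_ncard_ne_zero (Nat.ne_of_odd_add h)
  exact ⟨e, he, hve⟩

theorem oddVerts_singleton (x y : V) : oddVerts {s(x, y)} = {x, y} := by
  ext v
  by_cases hv : v ∈ s(x, y)
  · have : {e ∈ ({s(x, y)} : Set (Sym2 V)) | v ∈ e} = {s(x, y)} :=
      Set.sep_eq_self_iff_mem_true.mpr fun e he => (Set.mem_singleton_iff.mp he) ▸ hv
    simp_all [oddVerts]
  · have : {e ∈ ({s(x, y)} : Set (Sym2 V)) | v ∈ e} = ∅ :=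
      Set.sep_eq_empty_iff_mem_false.mpr fun e he => (Set.mem_singleton_iff.mp he) ▸ hv
    simp_all [oddVerts]

theorem IsJoin.covers {G : SimpleGraph V} {T : Set V} {F : Set (Sym2 V)} (h : IsJoin G T F)
    {v : V} (hv : v ∈ T) : Covers F v :=
  Covers.of_mem_oddVerts ((h.2 v).mpr hv)

def starEdges (c : V) (g : V → V) (B : Set V) : Set (Sym2 V) := {e | ∃ b ∈ B, e = s(c, g b)}

theorem ncard_starEdges {c : V} {g : V → V} {B : Set V} (hg : Set.InjOn g B) :
    (starEdges c g B).ncard = B.ncard := by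
  have : starEdges c g B = (fun b => s(c, g b)) '' B := by
    ext e
    simp only [starEdges, Set.mem_ofPred_eq, Set.mem_image, eq_comm]
  rw [this, Set.InjOn.ncard_image]
  exact fun b hb b' hb' h => hg hb hb' (Sym2.congr_right.mp h)

theorem mem_oddVerts_starEdges {c : V} {g : V → V} {B : Set V} (hg : Set.InjOn g B)
    (hc : ∀ b ∈ B, g b ≠ c) {v : V} :
    v ∈ oddVerts (starEdges c g B) ↔ (v = c ∧ Odd B.ncard) ∨ v ∈ g '' B := by
  by_cases hvc : v = c
  · subst hvc
    have hall : {e ∈ starEdges v g B | v ∈ e} = starEdges v g B :=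
      Set.sep_eq_self_iff_mem_true.mpr (by rintro _ ⟨b, -, rfl⟩; exact Sym2.mem_mk_left _ _)
    have hv : v ∉ g '' B := by rintro ⟨b, hb, hbv⟩; exact hc b hb hbv
    simp only [oddVerts, Set.mem_ofPred_eq, hall, ncard_starEdges hg, hv]
    tauto
  have hinc : {e ∈ starEdges c g B | v ∈ e} = {e | v ∈ g '' B ∧ e = s(c, v)} := by
    ext e
    constructor
    · rintro ⟨⟨b, hb, rfl⟩, hv⟩
      obtain rfl : v = g b := (Sym2.mem_iff.mp hv).resolve_left hvc
      exact ⟨⟨b, hb, rfl⟩, rfl⟩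
    · rintro ⟨⟨b, hb, rfl⟩, rfl⟩
      exact ⟨⟨b, hb, rfl⟩, Sym2.mem_mk_right _ _⟩
  by_cases hvB : v ∈ g '' B <;> simp [oddVerts, hinc, hvB, hvc]

def IsStableMinJoin (H : SimpleGraph V) (T A : Set V) (F : Set (Sym2 V)) : Prop :=
  IsJoin H T F ∧ ∀ P ⊆ A, ∀ J, IsJoin H (symmDiff T P) J → F.ncard ≤ J.ncard

section StableMinJoin

variable {H : SimpleGraph V} {T A : Set V} {F : Set (Sym2 V)}

theorem IsStableMinJoin.isMinJoin (h : IsStableMinJoin H T A F) : IsMinJoin H T F :=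
  ⟨h.1, fun J hJ => h.2 ∅ (Set.empty_subset A) J (by rwa [← Set.bot_eq_empty, symmDiff_bot])⟩

theorem IsMinJoin.isStableMinJoin {K : Set (Sym2 V)} (hF : IsMinJoin H T F)
    (hK : IsStableMinJoin H T A K) : IsStableMinJoin H T A F :=
  ⟨hF.1, fun P hP J hJ => (hF.2 K hK.1).trans (hK.2 P hP J hJ)⟩

end StableMinJoin

structure IsStableGraftOn (S : Set V) (H : SimpleGraph V) (T A : Set V) : Prop where
  support_subset : H.support ⊆ S
  subset : A ⊆ S
  exists_isStableMinJoin : ∃ F, IsStableMinJoin H T A F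

theorem IsStableGraftOn.T_subset {S : Set V} {H : SimpleGraph V} {T A : Set V}
    (h : IsStableGraftOn S H T A) : T ⊆ S := by
  obtain ⟨F, hF, -⟩ := h.exists_isStableMinJoin
  intro v hv
  obtain ⟨e, he, hve⟩ := hF.covers hv
  exact h.support_subset (mem_support_of_mem_edgeSet (hF.1 he) hve)

namespace IsRakeOn

variable {S : Set V} {G : SimpleGraph V} {T : Set V} {r : V} {B : Set V}

theorem support_subset (h : IsRakeOn S G T r B) : G.support ⊆ S :=
  fun v ⟨w, hvw⟩ => (h.1 v w hvw).1

theorem T_subset (h : IsRakeOn S G T r B) : T ⊆ S := h.2.2.1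

theorem not_adj (h : IsRakeOn S G T r B) {b b' : V} (hb : b ∈ B) (hb' : b' ∈ B) :
    ¬G.Adj b b' :=
  h.2.2.2.1 b hb b' hb'

theorem head_mem (h : IsRakeOn S G T r B) : r ∈ S \ B := h.2.2.2.2.2.1

theorem adj_head (h : IsRakeOn S G T r B) {b : V} (hb : b ∈ B) : G.Adj r b :=
  h.2.2.2.2.2.2.1 b hb

theorem exists_tooth (h : IsRakeOn S G T r B) : ∃ b ∈ B, G.Adj r b :=
  h.2.2.2.2.1 r h.head_mem

theorem mem_T_iff (h : IsRakeOn S G T r B) {v : V} : v ∈ T ↔ v ∈ B ∨ (v = r ∧ Odd B.ncard) := by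
  obtain ⟨-, -, -, -, -, -, -, hodd, heven⟩ := h
  by_cases hB : Odd B.ncard
  · simp [hodd hB, hB, or_comm]
  · simp [heven hB, hB]

theorem mem_sdiff_iff (h : IsRakeOn S G T r B) {v : V} : v ∈ T \ B ↔ v = r ∧ Odd B.ncard := by
  have := h.head_mem.2
  rw [Set.mem_sdiff, h.mem_T_iff]
  constructor
  · tauto
  · rintro ⟨rfl, hB⟩
    exact ⟨Or.inr ⟨rfl, hB⟩, this⟩

theorem isJoin_starEdges (h : IsRakeOn S G T r B) : IsJoin G T (starEdges r id B) := by
  refine isJoin_iff.mpr ⟨?_, ?_⟩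
  · rintro _ ⟨b, hb, rfl⟩
    exact h.adj_head hb
  · ext v
    rw [mem_oddVerts_starEdges (Set.injOn_id B) (fun b hb (hbr : b = r) => h.head_mem.2 (hbr ▸ hb)),
      h.mem_T_iff, Set.image_id]
    tauto

end IsRakeOn

def glueJoin (r : V) (rb : V → V) (B : Set V) (K : V → Set (Sym2 V)) : Set (Sym2 V) :=
  starEdges r rb B ∪ ⋃ b ∈ B, K b

theorem glueJoin_eq_biUnion (r : V) (rb : V → V) (B : Set V) (K : V → Set (Sym2 V)) :
    glueJoin r rb B K = ⋃ b ∈ B, insert s(r, rb b) (K b) := by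
  ext e
  simp only [glueJoin, starEdges, Set.mem_union, Set.mem_ofPred_eq, Set.mem_iUnion,
    Set.mem_insert_iff, exists_prop]
  grind

section Connected

variable {r : V} {rb : V → V} {B : Set V} {K : V → Set (Sym2 V)}

theorem covers_glueJoin_head (hB : B.Nonempty) : Covers (glueJoin r rb B K) r :=
  have ⟨b, hb⟩ := hB
  ⟨s(r, rb b), Or.inl ⟨b, hb, rfl⟩, Sym2.mem_mk_left _ _⟩

theorem connectedEdgeSet_glueJoin (hB : B.Nonempty) (hr : ∀ b ∈ B, rb b ≠ r)
    (hK : ∀ b ∈ B, ConnectedEdgeSet (K b) ∧ Covers (K b) (rb b)) :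
    ConnectedEdgeSet (glueJoin r rb B K) := by
  set F := glueJoin r rb B K
  have hadj : ∀ b ∈ B, (fromEdgeSet F).Adj (rb b) r := fun b hb => by
    rw [fromEdgeSet_adj, Sym2.eq_swap]
    exact ⟨Or.inl ⟨b, hb, rfl⟩, hr b hb⟩
  have hreach : ∀ z, Covers F z → (fromEdgeSet F).Reachable z r := by
    rintro z ⟨e, ⟨b, hb, rfl⟩ | he, hze⟩
    · rcases Sym2.mem_iff.mp hze with rfl | rfl
      · rfl
      · exact (hadj b hb).reachable
    · obtain ⟨b, hb, he⟩ := Set.mem_iUnion₂.mp he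
      have hKF : K b ⊆ F := Set.subset_union_of_subset_right (Set.subset_biUnion_of_mem hb) _
      exact (((hK b hb).1.2 z (rb b) ⟨e, he, hze⟩ (hK b hb).2).mono
        (fromEdgeSet_mono hKF)).trans (hadj b hb).reachable
  obtain ⟨e, he, -⟩ := covers_glueJoin_head (rb := rb) (K := K) hB
  exact ⟨⟨e, he⟩, fun x y hx hy => (hreach x hx).trans (hreach y hy).symm⟩

end Connected

def crossEdges (G : SimpleGraph V) (f : V → V → V) (b : V) : Set (Sym2 V) :=
  {e | ∃ x, G.Adj x b ∧ e = s(x, f b x)}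

def pieceEdges (G : SimpleGraph V) (GH : V → SimpleGraph V) (f : V → V → V) (b : V) :
    Set (Sym2 V) :=
  (GH b).edgeSet ∪ crossEdges G f b

structure IsGluing (S : Set V) (G : SimpleGraph V) (T : Set V) (r : V) (B : Set V)
    (SH : V → Set V) (GH : V → SimpleGraph V) (TH : V → Set V) (rb : V → V) (Ab : V → Set V)
    (f : V → V → V) : Prop where
  rake : IsRakeOn S G T r B
  piece : ∀ b ∈ B, IsStableGraftOn (SH b) (GH b) (TH b) (Ab b)
  disjoint : ∀ b ∈ B, ∀ b' ∈ B, b ≠ b' → Disjoint (SH b) (SH b')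
  disjoint_rake : ∀ b ∈ B, Disjoint (SH b) S
  map_mem : ∀ b ∈ B, ∀ x, G.Adj x b → f b x ∈ Ab b
  map_head : ∀ b ∈ B, f b r = rb b

namespace IsGluing

variable {S : Set V} {G : SimpleGraph V} {T : Set V} {r : V} {B : Set V} {SH : V → Set V}
  {GH : V → SimpleGraph V} {TH : V → Set V} {rb : V → V} {Ab : V → Set V} {f : V → V → V}
  {b : V} {v : V} {e : Sym2 V}

theorem notMem_rake (h : IsGluing S G T r B SH GH TH rb Ab f) (hb : b ∈ B) (hv : v ∈ SH b) :
    v ∉ S :=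
  Set.disjoint_left.mp (h.disjoint_rake b hb) hv

theorem eq_of_mem {b' : V} (h : IsGluing S G T r B SH GH TH rb Ab f) (hb : b ∈ B) (hb' : b' ∈ B)
    (hv : v ∈ SH b) (hv' : v ∈ (S \ B) ∪ SH b') : b' = b := by
  by_contra hne
  rcases hv' with hvS | hvb'
  · exact h.notMem_rake hb hv hvS.1
  · exact Set.disjoint_left.mp (h.disjoint b hb b' hb' (Ne.symm hne)) hv hvb'

theorem rb_mem_Ab (h : IsGluing S G T r B SH GH TH rb Ab f) (hb : b ∈ B) : rb b ∈ Ab b :=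
  h.map_head b hb ▸ h.map_mem b hb r (h.rake.adj_head hb)

theorem rb_mem (h : IsGluing S G T r B SH GH TH rb Ab f) (hb : b ∈ B) : rb b ∈ SH b :=
  (h.piece b hb).subset (h.rb_mem_Ab hb)

theorem rb_ne_head (h : IsGluing S G T r B SH GH TH rb Ab f) (hb : b ∈ B) : rb b ≠ r :=
  fun hr => h.notMem_rake hb (h.rb_mem hb) (hr ▸ h.rake.head_mem.1)

theorem rb_injOn (h : IsGluing S G T r B SH GH TH rb Ab f) : Set.InjOn rb B :=
  fun _ hb _ hb' hbb' => h.eq_of_mem hb' hb (h.rb_mem hb') (Or.inr (hbb' ▸ h.rb_mem hb))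

theorem symmDiff_subset (h : IsGluing S G T r B SH GH TH rb Ab f) (hb : b ∈ B) :
    symmDiff (TH b) {rb b} ⊆ SH b :=
  Set.symmDiff_subset_union.trans
    (Set.union_subset (h.piece b hb).T_subset (Set.singleton_subset_iff.mpr (h.rb_mem hb)))

theorem mem_glueT_iff_of_mem (h : IsGluing S G T r B SH GH TH rb Ab f) (hb : b ∈ B)
    (hv : v ∈ SH b) : v ∈ glueT T B TH rb ↔ v ∈ symmDiff (TH b) {rb b} := by
  simp only [glueT, Set.mem_union, Set.mem_iUnion₂]
  constructor
  · rintro (hvT | ⟨b', hb', hvb'⟩)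
    · exact absurd (h.rake.T_subset hvT.1) (h.notMem_rake hb hv)
    · rwa [← h.eq_of_mem hb hb' hv (Or.inr (h.symmDiff_subset hb' hvb'))]
  · exact fun hvb => Or.inr ⟨b, hb, hvb⟩

theorem mem_glueT_iff_of_forall_notMem (h : IsGluing S G T r B SH GH TH rb Ab f)
    (hv : ∀ b ∈ B, v ∉ SH b) : v ∈ glueT T B TH rb ↔ v = r ∧ Odd B.ncard := by
  simp only [glueT, Set.mem_union, Set.mem_iUnion₂, h.rake.mem_sdiff_iff]
  exact or_iff_left fun ⟨b, hb, hvb⟩ => hv b hb (h.symmDiff_subset hb hvb)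

theorem mem_of_mem_pieceEdges (h : IsGluing S G T r B SH GH TH rb Ab f) (hb : b ∈ B)
    (he : e ∈ pieceEdges G GH f b) (hv : v ∈ e) : v ∈ (S \ B) ∪ SH b := by
  rcases he with he | ⟨x, hx, rfl⟩
  · exact Or.inr ((h.piece b hb).support_subset (mem_support_of_mem_edgeSet he hv))
  · rcases Sym2.mem_iff.mp hv with rfl | rfl
    · exact Or.inl ⟨h.rake.support_subset hx.mem_support_left,
        fun hvB => h.rake.not_adj hvB hb hx⟩
    · exact Or.inr ((h.piece b hb).subset (h.map_mem b hb x hx))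

theorem exists_mem_of_mem_pieceEdges (h : IsGluing S G T r B SH GH TH rb Ab f) (hb : b ∈ B)
    (he : e ∈ pieceEdges G GH f b) : ∃ v ∈ e, v ∈ SH b := by
  rcases he with he | ⟨x, hx, rfl⟩
  · induction e using Sym2.ind with
    | h x y => exact ⟨x, Sym2.mem_mk_left x y,
        (h.piece b hb).support_subset (SimpleGraph.Adj.mem_support_left he)⟩
  · exact ⟨f b x, Sym2.mem_mk_right _ _, (h.piece b hb).subset (h.map_mem b hb x hx)⟩

theorem disjoint_edgeSet_crossEdges (h : IsGluing S G T r B SH GH TH rb Ab f) (hb : b ∈ B) :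
    Disjoint (GH b).edgeSet (crossEdges G f b) := by
  refine Set.disjoint_left.mpr fun e he ⟨x, hx, hex⟩ => ?_
  have hxS : x ∈ S := h.rake.support_subset hx.mem_support_left
  have hxb : x ∈ SH b :=
    (h.piece b hb).support_subset (mem_support_of_mem_edgeSet he (hex ▸ Sym2.mem_mk_left _ _))
  exact h.notMem_rake hb hxb hxS

theorem pairwiseDisjoint (h : IsGluing S G T r B SH GH TH rb Ab f) {W : V → Set (Sym2 V)}
    (hW : ∀ b ∈ B, W b ⊆ pieceEdges G GH f b) : B.PairwiseDisjoint W := by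
  intro b hb b' hb' hne
  refine Set.disjoint_left.mpr fun e he he' => hne ?_
  obtain ⟨v, hve, hvb⟩ := h.exists_mem_of_mem_pieceEdges hb (hW b hb he)
  exact (h.eq_of_mem hb hb' hvb (h.mem_of_mem_pieceEdges hb' (hW b' hb' he') hve)).symm

theorem mem_biUnion_iff (h : IsGluing S G T r B SH GH TH rb Ab f) {W : V → Set (Sym2 V)}
    (hW : ∀ b ∈ B, W b ⊆ pieceEdges G GH f b) (hb : b ∈ B) (hv : v ∈ SH b) (hve : v ∈ e) :
    e ∈ ⋃ b' ∈ B, W b' ↔ e ∈ W b := by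
  refine ⟨fun he => ?_, fun he => Set.mem_biUnion hb he⟩
  obtain ⟨b', hb', he⟩ := Set.mem_iUnion₂.mp he
  rwa [← h.eq_of_mem hb hb' hv (h.mem_of_mem_pieceEdges hb' (hW b' hb' he) hve)]

theorem edgeSet_glueGraph_cases (h : IsGluing S G T r B SH GH TH rb Ab f)
    (he : e ∈ (glueGraph G B GH f).edgeSet) :
    (∀ v ∈ e, v ∈ S \ B) ∨ ∃ b ∈ B, e ∈ pieceEdges G GH f b := by
  rw [glueGraph, edgeSet_fromEdgeSet] at he
  rcases he.1 with (⟨heG, heB⟩ | ⟨b, hb, x, hx, rfl⟩) | he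
  · exact Or.inl fun v hv => ⟨h.rake.support_subset (mem_support_of_mem_edgeSet heG hv), heB v hv⟩
  · exact Or.inr ⟨b, hb, Or.inr ⟨x, hx, rfl⟩⟩
  · obtain ⟨b, hb, he⟩ := Set.mem_iUnion₂.mp he
    exact Or.inr ⟨b, hb, Or.inl he⟩

theorem mem_pieceEdges_of_mem (h : IsGluing S G T r B SH GH TH rb Ab f) (hb : b ∈ B)
    (he : e ∈ (glueGraph G B GH f).edgeSet) (hve : v ∈ e) (hv : v ∈ SH b) :
    e ∈ pieceEdges G GH f b := by
  rcases h.edgeSet_glueGraph_cases he with hS | ⟨b', hb', he'⟩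
  · exact absurd (hS v hve).1 (h.notMem_rake hb hv)
  · rwa [← h.eq_of_mem hb hb' hv (h.mem_of_mem_pieceEdges hb' he' hve)]

theorem pieceEdges_subset (h : IsGluing S G T r B SH GH TH rb Ab f) (hb : b ∈ B) :
    pieceEdges G GH f b ⊆ (glueGraph G B GH f).edgeSet := by
  intro e he
  rw [glueGraph, edgeSet_fromEdgeSet]
  rcases he with he | ⟨x, hx, rfl⟩
  · exact ⟨Or.inr (Set.mem_biUnion hb he), (GH b).not_isDiag_of_mem_edgeSet he⟩
  · refine ⟨Or.inl (Or.inr ⟨b, hb, x, hx, rfl⟩), fun hdiag => ?_⟩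
    have hxf : x = f b x := Sym2.mk_isDiag_iff.mp hdiag
    exact h.notMem_rake hb (hxf ▸ (h.piece b hb).subset (h.map_mem b hb x hx))
      (h.rake.support_subset hx.mem_support_left)

theorem mk_head_mem_crossEdges (h : IsGluing S G T r B SH GH TH rb Ab f) (hb : b ∈ B) :
    s(r, rb b) ∈ crossEdges G f b :=
  ⟨r, h.rake.adj_head hb, by rw [h.map_head b hb]⟩

theorem oddVerts_inter_subset (h : IsGluing S G T r B SH GH TH rb Ab f) (hb : b ∈ B)
    {C : Set (Sym2 V)} (hC : C ⊆ crossEdges G f b) : oddVerts C ∩ SH b ⊆ Ab b := by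
  rintro v ⟨hv, hvb⟩
  obtain ⟨e, he, hve⟩ := Covers.of_mem_oddVerts hv
  obtain ⟨x, hx, rfl⟩ := hC he
  rcases Sym2.mem_iff.mp hve with rfl | rfl
  · exact absurd (h.rake.support_subset hx.mem_support_left) (h.notMem_rake hb hvb)
  · exact h.map_mem b hb x hx

theorem support_glueGraph_subset (h : IsGluing S G T r B SH GH TH rb Ab f) :
    (glueGraph G B GH f).support ⊆ glueSupport S B SH := by
  rintro v ⟨w, hvw⟩
  rcases h.edgeSet_glueGraph_cases (e := s(v, w)) hvw with hS | ⟨b, hb, he⟩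
  · exact Or.inl (hS v (Sym2.mem_mk_left v w))
  · rcases h.mem_of_mem_pieceEdges hb he (Sym2.mem_mk_left v w) with hv | hv
    exacts [Or.inl hv, Or.inr (Set.mem_biUnion hb hv)]

theorem insert_subset_pieceEdges (h : IsGluing S G T r B SH GH TH rb Ab f) (hb : b ∈ B)
    {K : Set (Sym2 V)} (hK : K ⊆ (GH b).edgeSet) : insert s(r, rb b) K ⊆ pieceEdges G GH f b :=
  Set.insert_subset (Or.inr (h.mk_head_mem_crossEdges hb)) (hK.trans Set.subset_union_left)

end IsGluing

end

section

omit [DecidableEq V]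

theorem even_ncard_symmDiff_iff {α : Type*} [Finite α] (s t : Set α) :
    Even (symmDiff s t).ncard ↔ (Even s.ncard ↔ Even t.ncard) := by
  have h1 := Set.ncard_union_add_ncard_inter s t
  have h2 : (s ∪ t).ncard = (symmDiff s t).ncard + (s ∩ t).ncard := by
    rw [← Set.ncard_union_eq (s := symmDiff s t) (t := s ∩ t) (disjoint_symmDiff_inf s t)]
    exact congrArg Set.ncard (symmDiff_sup_inf s t).symm
  rw [h2] at h1
  simp only [Nat.even_iff]
  omega

theorem ncard_biUnion_le_ncard_biUnion {ι α : Type*} [Finite α] {s : Set ι} (hs : s.Finite)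
    {W U : ι → Set α} (hU : s.PairwiseDisjoint U) (hle : ∀ i ∈ s, (W i).ncard ≤ (U i).ncard) :
    (⋃ i ∈ s, W i).ncard ≤ (⋃ i ∈ s, U i).ncard := by
  refine (hs.ncard_biUnion_le W).trans ?_
  rw [hs.ncard_biUnion (fun i _ => Set.toFinite (U i)) hU,
    finsum_mem_eq_finite_toFinset_sum _ hs, finsum_mem_eq_finite_toFinset_sum _ hs]
  exact Finset.sum_le_sum fun i hi => hle i (hs.mem_toFinset.mp hi)

theorem oddVerts_union {F F' : Set (Sym2 V)} (h : Disjoint F F') :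
    oddVerts (F ∪ F') = symmDiff (oddVerts F) (oddVerts F') := by
  ext v
  have hsplit : {e ∈ F ∪ F' | v ∈ e} = {e ∈ F | v ∈ e} ∪ {e ∈ F' | v ∈ e} := Set.sep_union
  rw [Set.mem_symmDiff]
  simp only [oddVerts, Set.mem_ofPred_eq, hsplit,
    Set.ncard_union_eq (h.mono (Set.sep_subset _ _) (Set.sep_subset _ _)), Nat.odd_add,
    ← Nat.not_odd_iff_even]
  tauto

theorem even_ncard_oddVerts {G : SimpleGraph V} {F : Set (Sym2 V)} (hF : F ⊆ G.edgeSet) :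
    Even (oddVerts F).ncard := by
  set H := SimpleGraph.fromEdgeSet F
  have hH : H.edgeSet = F := by
    rw [SimpleGraph.edgeSet_fromEdgeSet, sdiff_eq_left]
    exact Set.subset_compl_iff_disjoint_right.mp (hF.trans G.edgeSet_subset_compl_diagSet)
  have : oddVerts F = ↑({v | Odd (H.degree v)} : Finset V) := by
    ext v
    simp only [oddVerts, Set.mem_ofPred_eq, Finset.coe_filter, Finset.mem_univ, true_and]
    rw [← H.card_incidenceSet_eq_degree, ← Nat.card_eq_fintype_card, Nat.card_coe_set_eq,
      SimpleGraph.incidenceSet, hH]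
  rw [this, Set.ncard_coe_finset]
  exact H.even_card_odd_degree_vertices

theorem IsJoin.even_ncard {G : SimpleGraph V} {T : Set V} {F : Set (Sym2 V)} (h : IsJoin G T F) :
    Even T.ncard := by
  obtain ⟨hF, rfl⟩ := isJoin_iff.mp h
  exact even_ncard_oddVerts hF

namespace IsRakeOn

variable {S : Set V} {G : SimpleGraph V} {T : Set V} {r : V} {B : Set V}

theorem ncard_le_of_isJoin (h : IsRakeOn S G T r B) {P : Set V} (hP : P ⊆ S \ B)
    {J : Set (Sym2 V)} (hJ : IsJoin G (symmDiff T P) J) : B.ncard ≤ J.ncard := by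
  have hcov : ∀ b ∈ B, ∃ e ∈ J, b ∈ e := fun b hb => hJ.covers <|
    Set.mem_symmDiff.mpr (Or.inl ⟨h.mem_T_iff.mpr (Or.inl hb), fun hbP => (hP hbP).2 hb⟩)
  choose g hgJ hbg using fun b : B => hcov b b.2
  refine Nat.card_le_card_of_injective (fun b => ⟨g b, hgJ b⟩) fun b b' hgb => ?_
  by_contra hne
  have hbb' : (b : V) ≠ b' := fun h => hne (Subtype.ext h)
  have hgb' : g b = g b' := congrArg Subtype.val hgb
  have hedge : g b = s((b : V), (b' : V)) :=
    (Sym2.mem_and_mem_iff hbb').mp ⟨hbg b, hgb' ▸ hbg b'⟩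
  have hadj := hJ.1 (hgJ b)
  rw [hedge] at hadj
  exact h.not_adj b.2 b'.2 hadj

theorem isStableMinJoin (h : IsRakeOn S G T r B) :
    IsStableMinJoin G T (S \ B) (starEdges r id B) :=
  ⟨h.isJoin_starEdges, fun _ hP _ hJ =>
    (ncard_starEdges (Set.injOn_id B)).trans_le (h.ncard_le_of_isJoin hP hJ)⟩

end IsRakeOn

namespace IsGluing

variable {S : Set V} {G : SimpleGraph V} {T : Set V} {r : V} {B : Set V} {SH : V → Set V}
  {GH : V → SimpleGraph V} {TH : V → Set V} {rb : V → V} {Ab : V → Set V} {f : V → V → V}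
  {b : V} {K : V → Set (Sym2 V)} {P : Set V} {J : Set (Sym2 V)}

theorem isJoin_glueJoin (h : IsGluing S G T r B SH GH TH rb Ab f)
    (hK : ∀ b ∈ B, IsJoin (GH b) (TH b) (K b)) :
    IsJoin (glueGraph G B GH f) (glueT T B TH rb) (glueJoin r rb B K) := by
  have hW : ∀ b ∈ B, insert s(r, rb b) (K b) ⊆ pieceEdges G GH f b :=
    fun b hb => h.insert_subset_pieceEdges hb (hK b hb).1
  refine isJoin_iff.mpr ⟨?_, ?_⟩
  · rw [glueJoin_eq_biUnion]
    exact Set.iUnion₂_subset fun b hb => (hW b hb).trans (h.pieceEdges_subset hb)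
  ext v
  by_cases hv : ∃ b ∈ B, v ∈ SH b
  · obtain ⟨b, hb, hvb⟩ := hv
    have hvr : v ≠ r := fun hvr => h.notMem_rake hb hvb (hvr ▸ h.rake.head_mem.1)
    have hdisj : Disjoint {s(r, rb b)} (K b) := Set.disjoint_singleton_left.mpr fun hK' =>
      Set.disjoint_left.mp (h.disjoint_edgeSet_crossEdges hb) ((hK b hb).1 hK')
        (h.mk_head_mem_crossEdges hb)
    rw [h.mem_glueT_iff_of_mem hb hvb, glueJoin_eq_biUnion,
      mem_oddVerts_congr fun e hve => h.mem_biUnion_iff hW hb hvb hve, Set.insert_eq,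
      oddVerts_union hdisj, oddVerts_singleton, (isJoin_iff.mp (hK b hb)).2]
    simp only [Set.mem_symmDiff, Set.mem_insert_iff, Set.mem_singleton_iff, hvr, false_or]
    tauto
  · simp only [not_exists, not_and] at hv
    rw [h.mem_glueT_iff_of_forall_notMem hv, mem_oddVerts_congr (F' := starEdges r rb B) ?_,
      mem_oddVerts_starEdges h.rb_injOn fun b hb => h.rb_ne_head hb]
    · exact or_iff_left fun ⟨b, hb, hbv⟩ => hv b hb (hbv ▸ h.rb_mem hb)
    · intro e hve
      refine ⟨fun he => he.resolve_right fun he' => ?_, Or.inl⟩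
      obtain ⟨b, hb, he'⟩ := Set.mem_iUnion₂.mp he'
      exact hv b hb
        ((h.piece b hb).support_subset (mem_support_of_mem_edgeSet ((hK b hb).1 he') hve))

theorem isJoin_inter_edgeSet (h : IsGluing S G T r B SH GH TH rb Ab f) (hb : b ∈ B)
    (hP : P ⊆ S \ B) (hJ : IsJoin (glueGraph G B GH f) (symmDiff (glueT T B TH rb) P) J) :
    IsJoin (GH b) (symmDiff (TH b) (symmDiff {rb b} (oddVerts (J ∩ crossEdges G f b) ∩ SH b)))
      (J ∩ (GH b).edgeSet) := by
  refine isJoin_iff.mpr ⟨Set.inter_subset_right, ?_⟩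
  ext v
  by_cases hv : v ∈ SH b
  · have hJv : v ∈ oddVerts J ↔ v ∈ symmDiff (TH b) {rb b} := by
      have hvP : v ∉ P := fun hvP => h.notMem_rake hb hv (hP hvP).1
      rw [(isJoin_iff.mp hJ).2, Set.mem_symmDiff, h.mem_glueT_iff_of_mem hb hv]
      simp only [hvP, not_false_eq_true, and_true, false_and, or_false]
    have hsplit : v ∈ oddVerts J ↔ v ∈ oddVerts (J ∩ (GH b).edgeSet ∪ J ∩ crossEdges G f b) := by
      refine mem_oddVerts_congr fun e hve => ⟨fun he => ?_, fun he => ?_⟩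
      · rcases h.mem_pieceEdges_of_mem hb (hJ.1 he) hve hv with h1 | h2
        exacts [Or.inl ⟨he, h1⟩, Or.inr ⟨he, h2⟩]
      · rcases he with he | he <;> exact he.1
    rw [hsplit, oddVerts_union ((h.disjoint_edgeSet_crossEdges hb).mono
      Set.inter_subset_right Set.inter_subset_right)] at hJv
    simp only [Set.mem_symmDiff, Set.mem_inter_iff, Set.mem_singleton_iff] at hJv ⊢
    tauto
  · have hcov : ¬Covers (J ∩ (GH b).edgeSet) v := fun ⟨e, he, hve⟩ =>
      hv ((h.piece b hb).support_subset (mem_support_of_mem_edgeSet he.2 hve))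
    have hT : v ∉ TH b := fun hvT => hv ((h.piece b hb).T_subset hvT)
    have hrb : v ≠ rb b := fun hvr => hv (hvr ▸ h.rb_mem hb)
    refine iff_of_false (fun hodd => hcov (Covers.of_mem_oddVerts hodd)) ?_
    simp only [Set.mem_symmDiff, Set.mem_inter_iff, Set.mem_singleton_iff, hv, hT, hrb]
    tauto

theorem inter_crossEdges_nonempty (h : IsGluing S G T r B SH GH TH rb Ab f) (hb : b ∈ B)
    (hP : P ⊆ S \ B) (hJ : IsJoin (glueGraph G B GH f) (symmDiff (glueT T B TH rb) P) J) :
    (J ∩ crossEdges G f b).Nonempty := by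
  by_contra hempty
  have hinner := h.isJoin_inter_edgeSet hb hP hJ
  rw [Set.not_nonempty_iff_eq_empty.mp hempty,
    show oddVerts (∅ : Set (Sym2 V)) = ∅ by ext; simp [oddVerts], Set.empty_inter,
    ← Set.bot_eq_empty, symmDiff_bot] at hinner
  obtain ⟨K, hK, -⟩ := (h.piece b hb).exists_isStableMinJoin
  have hpar := hinner.even_ncard
  rw [even_ncard_symmDiff_iff, Set.ncard_singleton] at hpar
  exact Nat.not_even_one (hpar.mp hK.even_ncard)

theorem ncard_insert_le (h : IsGluing S G T r B SH GH TH rb Ab f) (hb : b ∈ B)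
    {K : Set (Sym2 V)} (hK : IsStableMinJoin (GH b) (TH b) (Ab b) K)
    (hP : P ⊆ S \ B) (hJ : IsJoin (glueGraph G B GH f) (symmDiff (glueT T B TH rb) P) J) :
    (insert s(r, rb b) K).ncard ≤ (J ∩ pieceEdges G GH f b).ncard := by
  have hPb : symmDiff {rb b} (oddVerts (J ∩ crossEdges G f b) ∩ SH b) ⊆ Ab b :=
    Set.symmDiff_subset_union.trans (Set.union_subset
      (Set.singleton_subset_iff.mpr (h.rb_mem_Ab hb))
      (h.oddVerts_inter_subset hb Set.inter_subset_right))
  calc (insert s(r, rb b) K).ncard ≤ K.ncard + 1 := Set.ncard_insert_le _ _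
    _ ≤ (J ∩ (GH b).edgeSet).ncard + (J ∩ crossEdges G f b).ncard :=
        add_le_add (hK.2 _ hPb _ (h.isJoin_inter_edgeSet hb hP hJ))
          (h.inter_crossEdges_nonempty hb hP hJ).ncard_pos
    _ = (J ∩ pieceEdges G GH f b).ncard := by
        rw [pieceEdges, Set.inter_union_distrib_left, Set.ncard_union_eq
          ((h.disjoint_edgeSet_crossEdges hb).mono Set.inter_subset_right Set.inter_subset_right)]

theorem ncard_glueJoin_le (h : IsGluing S G T r B SH GH TH rb Ab f)
    (hK : ∀ b ∈ B, IsStableMinJoin (GH b) (TH b) (Ab b) (K b))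
    (hP : P ⊆ S \ B) (hJ : IsJoin (glueGraph G B GH f) (symmDiff (glueT T B TH rb) P) J) :
    (glueJoin r rb B K).ncard ≤ J.ncard := by
  rw [glueJoin_eq_biUnion]
  calc _ ≤ (⋃ b ∈ B, J ∩ pieceEdges G GH f b).ncard :=
        ncard_biUnion_le_ncard_biUnion B.toFinite
          (h.pairwiseDisjoint fun _ _ => Set.inter_subset_right)
          fun b hb => h.ncard_insert_le hb (hK b hb) hP hJ
    _ ≤ J.ncard := Set.ncard_le_ncard (Set.iUnion₂_subset fun _ _ => Set.inter_subset_left)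

theorem isStableMinJoin_glueJoin (h : IsGluing S G T r B SH GH TH rb Ab f)
    (hK : ∀ b ∈ B, IsStableMinJoin (GH b) (TH b) (Ab b) (K b)) :
    IsStableMinJoin (glueGraph G B GH f) (glueT T B TH rb) (S \ B) (glueJoin r rb B K) :=
  ⟨h.isJoin_glueJoin fun b hb => (hK b hb).1, fun _ hP _ hJ => h.ncard_glueJoin_le hK hP hJ⟩

theorem isStableGraftOn (h : IsGluing S G T r B SH GH TH rb Ab f) :
    IsStableGraftOn (glueSupport S B SH) (glueGraph G B GH f) (glueT T B TH rb) (S \ B) := by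
  choose! K hK using fun b hb => (h.piece b hb).exists_isStableMinJoin
  exact ⟨h.support_glueGraph_subset, Set.subset_union_left, _, h.isStableMinJoin_glueJoin hK⟩

end IsGluing

theorem PClass.isStableGraftOn {S : Set V} {H : SimpleGraph V} {T : Set V} {r : V} {A : Set V}
    (hp : PClass S H T r A) : IsStableGraftOn S H T A := by
  induction hp with
  | base S G T r B hrake =>
    exact ⟨hrake.support_subset, Set.sdiff_subset, _, hrake.isStableMinJoin⟩
  | glue S G T r B SH GH TH rb Ab f hrake _ hdisj hdisjS hf hfr ih =>
    exact (IsGluing.mk hrake ih hdisj hdisjS hf hfr).isStableGraftOn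

end

/-- given a rake `(G, T)` with head `r` and tooth set `B`, members
`(GH b, TH b) ∈ P(rb b, Ab b)` for `b ∈ B` (mutually disjoint and disjoint from the
rake), and connected minimum joins `FH b` of `(GH b, TH b)` covering `rb b`, the set
`F̂ = {r r_b : b ∈ B} ∪ ⋃_{b ∈ B} FH b` is a connected minimum join of the gluing sum
`(Ĝ, T̂)` covering `r`. -/
theorem stmt_14 (S : Set V) (G : SimpleGraph V) (T : Set V) (r : V) (B : Set V)
    (SH : V → Set V) (GH : V → SimpleGraph V) (TH : V → Set V)
    (rb : V → V) (Ab : V → Set V) (f : V → V → V)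
    (hrake : IsRakeOn S G T r B)
    (hP : ∀ b ∈ B, PClass (SH b) (GH b) (TH b) (rb b) (Ab b))
    (hdisj : ∀ b ∈ B, ∀ b' ∈ B, b ≠ b' → Disjoint (SH b) (SH b'))
    (hdisjS : ∀ b ∈ B, Disjoint (SH b) S)
    (hf : ∀ b ∈ B, ∀ x : V, G.Adj x b → f b x ∈ Ab b)
    (hfr : ∀ b ∈ B, f b r = rb b)
    (FH : V → Set (Sym2 V))
    (hFH : ∀ b ∈ B, IsMinJoin (GH b) (TH b) (FH b) ∧
      ConnectedEdgeSet (FH b) ∧ Covers (FH b) (rb b)) :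
    IsMinJoin (glueGraph G B GH f) (glueT T B TH rb)
      ({e : Sym2 V | ∃ b ∈ B, e = s(r, rb b)} ∪ ⋃ b ∈ B, FH b) ∧
    ConnectedEdgeSet ({e : Sym2 V | ∃ b ∈ B, e = s(r, rb b)} ∪ ⋃ b ∈ B, FH b) ∧
    Covers ({e : Sym2 V | ∃ b ∈ B, e = s(r, rb b)} ∪ ⋃ b ∈ B, FH b) r := by
  have h : IsGluing S G T r B SH GH TH rb Ab f :=
    ⟨hrake, fun b hb => (hP b hb).isStableGraftOn, hdisj, hdisjS, hf, hfr⟩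
  have hstable : ∀ b ∈ B, IsStableMinJoin (GH b) (TH b) (Ab b) (FH b) := fun b hb =>
    have ⟨_, hK⟩ := (h.piece b hb).exists_isStableMinJoin
    (hFH b hb).1.isStableMinJoin hK
  obtain ⟨b₀, hb₀, -⟩ := hrake.exists_tooth
  exact ⟨(h.isStableMinJoin_glueJoin hstable).isMinJoin,
    connectedEdgeSet_glueJoin ⟨b₀, hb₀⟩ (fun b hb => h.rb_ne_head hb) fun b hb => (hFH b hb).2,
    covers_glueJoin_head ⟨b₀, hb₀⟩⟩
end
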